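/- Let A = A₁ ⊕ A₂ with A₁, A₂ ideals of a Zinbiel algebra A, ρᵢ the projections, and φ in the centroid of A. Then for i ≠ j, the map ρᵢ ∘ φ ∘ ρⱼ restricted to Aⱼ takes values in the center of Aᵢ and annihilates Aⱼ • Aⱼ. -/

import Mathlib

/-!
Two complementary ideals multiply to zero, since their product lies in both. Hence, against
elements of `A₁`, an element `w` of `A` and its `A₁`-component `ρ₁ w` multiply the same way.
For `x ∈ A₂` and `z ∈ A₁` this gives `ρ₁ (φ x) • z = φ x • z = φ (x • z) = 0`, and symmetrically
on the other side, so `ρ₁ (φ x)` is central in `A₁`. For `x, y ∈ A₂`,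
`φ (x • y) = φ x • y` lies in the ideal `A₂`, which `ρ₁` kills.
-/

namespace Submodule

variable {R M : Type*} [CommRing R] [AddCommGroup M] [Module R M]
  {mul : M →ₗ[R] M →ₗ[R] M} {I J : Submodule R M}

def IsMulIdeal (mul : M →ₗ[R] M →ₗ[R] M) (I : Submodule R M) : Prop :=
  ∀ a, ∀ x ∈ I, mul a x ∈ I ∧ mul x a ∈ I

def mulCenter (mul : M →ₗ[R] M →ₗ[R] M) (I : Submodule R M) : Set M :=
  {c | c ∈ I ∧ ∀ z ∈ I, mul c z = 0 ∧ mul z c = 0}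

namespace IsMulIdeal

lemma mul_eq_zero_of_disjoint (hI : IsMulIdeal mul I) (hJ : IsMulIdeal mul J)
    (h : Disjoint I J) {x y : M} (hx : x ∈ I) (hy : y ∈ J) : mul x y = 0 :=
  disjoint_def.mp h _ (hI y x hx).2 (hJ x y hy).1

lemma mul_projection_left (hI : IsMulIdeal mul I) (hJ : IsMulIdeal mul J) (h : IsCompl I J)
    (w : M) {z : M} (hz : z ∈ I) : mul (I.projection J h w) z = mul w z := by
  have hw : mul (w - I.projection J h w) z = 0 :=
    hJ.mul_eq_zero_of_disjoint hI h.symm.disjoint (sub_projection_mem h w) hz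
  rwa [map_sub, LinearMap.sub_apply, sub_eq_zero, eq_comm] at hw

lemma mul_projection_right (hI : IsMulIdeal mul I) (hJ : IsMulIdeal mul J) (h : IsCompl I J)
    (w : M) {z : M} (hz : z ∈ I) : mul z (I.projection J h w) = mul z w := by
  have hw : mul z (w - I.projection J h w) = 0 :=
    hI.mul_eq_zero_of_disjoint hJ h.disjoint hz (sub_projection_mem h w)
  rwa [map_sub, sub_eq_zero, eq_comm] at hw

end IsMulIdeal

end Submodule

namespace LinearMap

open Submodule

variable {R M : Type*} [CommRing R] [AddCommGroup M] [Module R M]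
  {mul : M →ₗ[R] M →ₗ[R] M} {I J : Submodule R M} {φ : Module.End R M}

def IsInCentroid (mul : M →ₗ[R] M →ₗ[R] M) (φ : Module.End R M) : Prop :=
  ∀ a b, φ (mul a b) = mul (φ a) b ∧ φ (mul a b) = mul a (φ b)

namespace IsInCentroid

lemma projection_apply_mem_mulCenter (hφ : IsInCentroid mul φ) (hI : IsMulIdeal mul I)
    (hJ : IsMulIdeal mul J) (h : IsCompl I J) {x : M} (hx : x ∈ J) :
    I.projection J h (φ x) ∈ I.mulCenter mul := by
  refine ⟨projection_apply_mem h _, fun z hz => ⟨?_, ?_⟩⟩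
  · rw [hI.mul_projection_left hJ h _ hz, ← (hφ x z).1,
      hJ.mul_eq_zero_of_disjoint hI h.symm.disjoint hx hz, map_zero]
  · rw [hI.mul_projection_right hJ h _ hz, ← (hφ z x).2,
      hI.mul_eq_zero_of_disjoint hJ h.disjoint hz hx, map_zero]

lemma projection_apply_mul_eq_zero (hφ : IsInCentroid mul φ) (hJ : IsMulIdeal mul J)
    (h : IsCompl I J) {x y : M} (hy : y ∈ J) : I.projection J h (φ (mul x y)) = 0 := by
  rw [(hφ x y).1]
  exact projection_apply_of_mem_right h (hJ (φ x) y hy).1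

theorem crossComponent_mem_mulCenter_and_mul_eq_zero (hφ : IsInCentroid mul φ)
    (hI : IsMulIdeal mul I) (hJ : IsMulIdeal mul J) (h : IsCompl I J) :
    (∀ x ∈ J, (I.projection J h ∘ₗ φ ∘ₗ J.projection I h.symm) x ∈ I.mulCenter mul) ∧
      ∀ x ∈ J, ∀ y ∈ J, (I.projection J h ∘ₗ φ ∘ₗ J.projection I h.symm) (mul x y) = 0 := by
  refine ⟨fun x hx => ?_, fun x _ y hy => ?_⟩
  · rw [comp_apply, comp_apply, projection_apply_of_mem_left h.symm hx]
    exact hφ.projection_apply_mem_mulCenter hI hJ h hx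
  · rw [comp_apply, comp_apply, projection_apply_of_mem_left h.symm (hJ x y hy).1]
    exact hφ.projection_apply_mul_eq_zero hJ h hy

end IsInCentroid

end LinearMap

open Submodule LinearMap in
theorem cross_component_maps_central_general {K : Type*} [Field K] {A : Type*}
    [AddCommGroup A] [Module K A] (mul : A →ₗ[K] A →ₗ[K] A)
    (A₁ A₂ : Submodule K A)
    (hI₁ : ∀ a : A, ∀ x ∈ A₁, mul a x ∈ A₁ ∧ mul x a ∈ A₁)
    (hI₂ : ∀ a : A, ∀ x ∈ A₂, mul a x ∈ A₂ ∧ mul x a ∈ A₂)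
    (hcompl : IsCompl A₁ A₂)
    (ρ₁ ρ₂ : Module.End K A)
    (hρ₁ : ρ₁ = A₁.subtype ∘ₗ Submodule.linearProjOfIsCompl A₁ A₂ hcompl)
    (hρ₂ : ρ₂ = A₂.subtype ∘ₗ Submodule.linearProjOfIsCompl A₂ A₁ hcompl.symm)
    (φ : Module.End K A)
    (hφ : ∀ a b : A, φ (mul a b) = mul (φ a) b ∧ φ (mul a b) = mul a (φ b)) :
    (∀ x ∈ A₂, (ρ₁ ∘ₗ φ ∘ₗ ρ₂) x ∈ A₁ ∧
        (∀ z ∈ A₁, mul ((ρ₁ ∘ₗ φ ∘ₗ ρ₂) x) z = 0 ∧ mul z ((ρ₁ ∘ₗ φ ∘ₗ ρ₂) x) = 0)) ∧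
    (∀ x ∈ A₂, ∀ y ∈ A₂, (ρ₁ ∘ₗ φ ∘ₗ ρ₂) (mul x y) = 0) ∧
    (∀ x ∈ A₁, (ρ₂ ∘ₗ φ ∘ₗ ρ₁) x ∈ A₂ ∧
        (∀ z ∈ A₂, mul ((ρ₂ ∘ₗ φ ∘ₗ ρ₁) x) z = 0 ∧ mul z ((ρ₂ ∘ₗ φ ∘ₗ ρ₁) x) = 0)) ∧
    (∀ x ∈ A₁, ∀ y ∈ A₁, (ρ₂ ∘ₗ φ ∘ₗ ρ₁) (mul x y) = 0) := by
  have hφ : IsInCentroid mul φ := hφ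
  have hρ₁ : ρ₁ = A₁.projection A₂ hcompl := hρ₁
  have hρ₂ : ρ₂ = A₂.projection A₁ hcompl.symm := hρ₂
  subst hρ₁ hρ₂
  obtain ⟨h₁₂, h₁₂'⟩ := hφ.crossComponent_mem_mulCenter_and_mul_eq_zero hI₁ hI₂ hcompl
  obtain ⟨h₂₁, h₂₁'⟩ := hφ.crossComponent_mem_mulCenter_and_mul_eq_zero hI₂ hI₁ hcompl.symm
  exact ⟨h₁₂, h₁₂', h₂₁, h₂₁'⟩

/-- For `A = A₁ ⊕ A₂` a direct sum of ideals of a Zinbiel algebra and `φ` in the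
centroid, the map `ρᵢ ∘ φ ∘ ρⱼ` (`i ≠ j`) restricted to `Aⱼ` takes values in the
center of `Aᵢ` and annihilates `Aⱼ • Aⱼ`. -/
theorem cross_component_maps_central {K : Type*} [Field K] {A : Type*}
    [AddCommGroup A] [Module K A] (mul : A →ₗ[K] A →ₗ[K] A)
    (zinbiel : ∀ a b c : A, mul (mul a b) c = mul a (mul b c) + mul a (mul c b))
    (A₁ A₂ : Submodule K A)
    (hI₁ : ∀ a : A, ∀ x ∈ A₁, mul a x ∈ A₁ ∧ mul x a ∈ A₁)
    (hI₂ : ∀ a : A, ∀ x ∈ A₂, mul a x ∈ A₂ ∧ mul x a ∈ A₂)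
    (hcompl : IsCompl A₁ A₂)
    (ρ₁ ρ₂ : Module.End K A)
    (hρ₁ : ρ₁ = A₁.subtype ∘ₗ Submodule.linearProjOfIsCompl A₁ A₂ hcompl)
    (hρ₂ : ρ₂ = A₂.subtype ∘ₗ Submodule.linearProjOfIsCompl A₂ A₁ hcompl.symm)
    (φ : Module.End K A)
    (hφ : ∀ a b : A, φ (mul a b) = mul (φ a) b ∧ φ (mul a b) = mul a (φ b)) :
    (∀ x ∈ A₂, (ρ₁ ∘ₗ φ ∘ₗ ρ₂) x ∈ A₁ ∧
        (∀ z ∈ A₁, mul ((ρ₁ ∘ₗ φ ∘ₗ ρ₂) x) z = 0 ∧ mul z ((ρ₁ ∘ₗ φ ∘ₗ ρ₂) x) = 0)) ∧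
    (∀ x ∈ A₂, ∀ y ∈ A₂, (ρ₁ ∘ₗ φ ∘ₗ ρ₂) (mul x y) = 0) ∧
    (∀ x ∈ A₁, (ρ₂ ∘ₗ φ ∘ₗ ρ₁) x ∈ A₂ ∧
        (∀ z ∈ A₂, mul ((ρ₂ ∘ₗ φ ∘ₗ ρ₁) x) z = 0 ∧ mul z ((ρ₂ ∘ₗ φ ∘ₗ ρ₁) x) = 0)) ∧
    (∀ x ∈ A₁, ∀ y ∈ A₁, (ρ₂ ∘ₗ φ ∘ₗ ρ₁) (mul x y) = 0) :=
  cross_component_maps_central_general mul A₁ A₂ hI₁ hI₂ hcompl ρ₁ ρ₂ hρ₁ hρ₂ φ hφ
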